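/- The kernel D of the natural surjection ℤ/dℤ * ℤ → ℤ/dℤ × ℤ (the Cartesian subgroup of the free product ⟨a,t | a^d = 1⟩) is a free group, freely generated by the commutators [t^k, a^s] for k ∈ ℤ \ {0} and 1 ≤ s ≤ d-1. -/

import Mathlib

/-- The defining relation of the Baumslag-Solitar group `BS(m,n)`:
`t⁻¹ * a^m * t * a^(-n)`. -/
def BSrels (m n : ℤ) : Set (FreeGroup (Fin 2)) :=
  {(FreeGroup.of 1)⁻¹ * (FreeGroup.of 0) ^ m * (FreeGroup.of 1) * ((FreeGroup.of 0) ^ n)⁻¹}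

/-- The Baumslag-Solitar group `BS(m,n) = ⟨a, t ∣ t⁻¹ aᵐ t = aⁿ⟩`. -/
abbrev BS (m n : ℤ) : Type := PresentedGroup (BSrels m n)

/-- The generator `a` of `BS(m,n)`. -/
def bsa (m n : ℤ) : BS m n := PresentedGroup.of 0

/-- The generator `t` of `BS(m,n)`. -/
def bst (m n : ℤ) : BS m n := PresentedGroup.of 1

/-- The relation \`a^d = 1\` defining the free product \`ℤ/dℤ * ℤ = ⟨a, t ∣ a^d⟩\`. -/
def FPrels (d : ℤ) : Set (FreeGroup (Fin 2)) := {(FreeGroup.of 0) ^ d}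

/-- The free product \`ℤ/dℤ * ℤ\`, presented as \`⟨a, t ∣ a^d = 1⟩\`. -/
abbrev FP (d : ℤ) : Type := PresentedGroup (FPrels d)

/-- The generator \`a\` (of order \`d\`) of \`ℤ/dℤ * ℤ\`. -/
def fpa (d : ℤ) : FP d := PresentedGroup.of 0

/-- The generator \`t\` (of infinite order) of \`ℤ/dℤ * ℤ\`. -/
def fpt (d : ℤ) : FP d := PresentedGroup.of 1

/-!
Write `x_j = a^j t a^(-j)` for `j ∈ ℤ/d`. Killing `t` splits `ℤ/dℤ * ℤ` as `F(x_j) ⋊ ℤ/d`, under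
which `π` becomes the pair (the `ℤ/d`-coordinate, the exponent sum of the free part); so the
Cartesian subgroup is the exponent-sum kernel of the free group on the `x_j`. That kernel is free
on the Schreier generators `y_{m,j} = x_0^m x_j x_0^(-m-1)` (`j ≠ 0`), and
`[t^k, a^s] = x_0^(-k) x_{-s}^k = y_{-k,-s} ⋯ y_{-1,-s}` for `k > 0` (similarly for `k < 0`):
a unitriangular change of basis, so the commutators are a free basis as well.
-/

namespace FreeGroup

open Multiplicative SemidirectProduct

variable {X : Type*}

def expSum (X : Type*) : FreeGroup X →* Multiplicative ℤ :=
  FreeGroup.lift fun _ => ofAdd 1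

@[simp]
lemma expSum_of (x : X) : expSum X (of x) = ofAdd 1 := lift_apply_of

def shiftAut (Y : Type*) : Multiplicative ℤ →* MulAut (FreeGroup (ℤ × Y)) :=
  MonoidHom.mk' (fun n => freeGroupCongr ((Equiv.addLeft n.toAdd).prodCongr (Equiv.refl Y)))
    fun m n => by
      apply MulEquiv.toMonoidHom_injective
      ext ⟨k, y⟩; simp [add_assoc]

@[simp]
lemma shiftAut_of {Y : Type*} (n : Multiplicative ℤ) (k : ℤ) (y : Y) :
    shiftAut Y n (of (k, y)) = of (n.toAdd + k, y) := by
  simp [shiftAut]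

section Schreier

variable (x₀ : X)

def schreierHom : FreeGroup (ℤ × {x // x ≠ x₀}) →* FreeGroup X :=
  lift fun p => of x₀ ^ p.1 * of (p.2 : X) * of x₀ ^ (-p.1 - 1)

def ofSemidirect : FreeGroup (ℤ × {x // x ≠ x₀}) ⋊[shiftAut _] Multiplicative ℤ →* FreeGroup X :=
  SemidirectProduct.lift (schreierHom x₀) (zpowersHom _ (of x₀)) fun n => by
    ext ⟨k, y⟩
    simp only [MonoidHom.comp_apply, MulEquiv.coe_toMonoidHom, shiftAut_of, schreierHom,
      lift_apply_of, MulAut.conj_apply, zpowersHom_apply, zpow_add]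
    group

@[simp]
lemma ofSemidirect_inl (w : FreeGroup (ℤ × {x // x ≠ x₀})) :
    ofSemidirect x₀ (inl w) = schreierHom x₀ w :=
  lift_inl _ _ _ _

@[simp]
lemma ofSemidirect_inr (n : Multiplicative ℤ) : ofSemidirect x₀ (inr n) = of x₀ ^ n.toAdd :=
  lift_inr _ _ _ _

lemma ofSemidirect_comp_inl : (ofSemidirect x₀).comp inl = schreierHom x₀ :=
  lift_comp_inl _ _ _

variable [DecidableEq X]

def toSemidirect : FreeGroup X →* FreeGroup (ℤ × {x // x ≠ x₀}) ⋊[shiftAut _] Multiplicative ℤ :=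
  lift fun x => if h : x = x₀ then inr (ofAdd 1) else inl (of (0, ⟨x, h⟩)) * inr (ofAdd 1)

lemma ofSemidirect_comp_toSemidirect :
    (ofSemidirect x₀).comp (toSemidirect x₀) = MonoidHom.id _ := by
  ext x
  by_cases h : x = x₀
  · subst h; simp [toSemidirect]
  · simp [toSemidirect, h, schreierHom]

lemma toSemidirect_comp_ofSemidirect :
    (toSemidirect x₀).comp (ofSemidirect x₀) = MonoidHom.id _ := by
  set T : FreeGroup (ℤ × {x // x ≠ x₀}) ⋊[shiftAut _] Multiplicative ℤ := inr (ofAdd 1)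
  have hx₀ : toSemidirect x₀ (of x₀) = T := by simp [toSemidirect, T]
  apply SemidirectProduct.hom_ext
  · apply FreeGroup.ext_hom
    rintro ⟨k, y⟩
    have hy : toSemidirect x₀ (of y) = inl (of (0, y)) * T := by simp [toSemidirect, y.2, T]
    have hshift : inl (of (k, y)) = T ^ k * inl (of (0, y)) * (T ^ k)⁻¹ := by
      rw [← _root_.map_zpow, ← _root_.map_inv, ← inl_aut, shiftAut_of]; simp
    simp only [MonoidHom.comp_apply, ofSemidirect_inl, schreierHom, lift_apply_of, _root_.map_mul,
      _root_.map_zpow, hx₀, hy, MonoidHom.id_apply]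
    rw [hshift]
    group
  · apply MonoidHom.ext_mint
    simp [hx₀, T]

def semidirectEquiv :
    FreeGroup X ≃* FreeGroup (ℤ × {x // x ≠ x₀}) ⋊[shiftAut _] Multiplicative ℤ :=
  (toSemidirect x₀).toMulEquiv (ofSemidirect x₀) (ofSemidirect_comp_toSemidirect x₀)
    (toSemidirect_comp_ofSemidirect x₀)

lemma rightHom_comp_toSemidirect : rightHom.comp (toSemidirect x₀) = expSum X := by
  ext x
  by_cases h : x = x₀
  · subst h; simp [toSemidirect]
  · simp [toSemidirect, h]

lemma schreierHom_injective : Function.Injective (schreierHom x₀) := by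
  rw [← ofSemidirect_comp_inl]
  exact (semidirectEquiv x₀).symm.injective.comp inl_injective

lemma range_schreierHom : (schreierHom x₀).range = (expSum X).ker := by
  rw [← rightHom_comp_toSemidirect x₀, ← MonoidHom.comap_ker, ← range_inl_eq_ker_rightHom,
    ← ofSemidirect_comp_inl, MonoidHom.range_comp]
  exact (Subgroup.comap_equiv_eq_map_symm (semidirectEquiv x₀) _).symm

end Schreier

section Telescope

variable (S : Type*)

def ofNeZero (k : ℤ) (s : S) : FreeGroup ({k : ℤ // k ≠ 0} × S) :=
  if h : k = 0 then 1 else of (⟨k, h⟩, s)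

@[simp]
lemma ofNeZero_zero (s : S) : ofNeZero S 0 s = 1 := dif_pos rfl

def telescope : FreeGroup (ℤ × S) →* FreeGroup ({k : ℤ // k ≠ 0} × S) :=
  lift fun p => ofNeZero S (-p.1) p.2 * (ofNeZero S (-p.1 - 1) p.2)⁻¹

@[simp]
lemma telescope_of (m : ℤ) (s : S) :
    telescope S (of (m, s)) = ofNeZero S (-m) s * (ofNeZero S (-m - 1) s)⁻¹ := lift_apply_of

lemma telescope_surjective : Function.Surjective (telescope S) := by
  rw [← MonoidHom.range_eq_top, eq_top_iff, ← closure_range_of, Subgroup.closure_le]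
  rintro _ ⟨⟨⟨k, hk⟩, s⟩, rfl⟩
  have mem_range : ∀ k, ofNeZero S k s ∈ (telescope S).range := by
    intro k
    induction k using Int.induction_on with
    | zero => simp
    | succ i ih =>
      have : ofNeZero S (i + 1) s = telescope S (of (-(i + 1), s)) * ofNeZero S i s := by simp
      rw [this]
      exact mul_mem (MonoidHom.mem_range.mpr ⟨_, rfl⟩) ih
    | pred i ih =>
      have : ofNeZero S (-i - 1) s = (telescope S (of (i, s)))⁻¹ * ofNeZero S (-i) s := by simp
      rw [this]
      exact mul_mem (inv_mem (MonoidHom.mem_range.mpr ⟨_, rfl⟩)) ih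
  simpa [ofNeZero, hk] using mem_range k

end Telescope

section PowerBasis

variable (x₀ : X)

def powerBasisHom : FreeGroup ({k : ℤ // k ≠ 0} × {x // x ≠ x₀}) →* FreeGroup X :=
  lift fun p => (of x₀ ^ (p.1 : ℤ))⁻¹ * of (p.2 : X) ^ (p.1 : ℤ)

lemma powerBasisHom_ofNeZero (k : ℤ) (y : {x // x ≠ x₀}) :
    powerBasisHom x₀ (ofNeZero _ k y) = (of x₀ ^ k)⁻¹ * of (y : X) ^ k := by
  by_cases hk : k = 0
  · simp [hk]
  · simp [ofNeZero, hk, powerBasisHom]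

lemma powerBasisHom_comp_telescope : (powerBasisHom x₀).comp (telescope _) = schreierHom x₀ := by
  ext ⟨m, y⟩
  simp only [MonoidHom.comp_apply, telescope_of, _root_.map_mul, _root_.map_inv,
    powerBasisHom_ofNeZero, schreierHom, lift_apply_of]
  group

variable [DecidableEq X]

lemma powerBasisHom_injective : Function.Injective (powerBasisHom x₀) := by
  intro a b h
  obtain ⟨a, rfl⟩ := telescope_surjective _ a
  obtain ⟨b, rfl⟩ := telescope_surjective _ b
  rw [← MonoidHom.comp_apply, ← MonoidHom.comp_apply, powerBasisHom_comp_telescope] at h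
  rw [schreierHom_injective x₀ h]

lemma range_powerBasisHom : (powerBasisHom x₀).range = (expSum X).ker := by
  rw [← range_schreierHom, ← powerBasisHom_comp_telescope, MonoidHom.range_comp,
    MonoidHom.range_eq_top.mpr (telescope_surjective _), ← MonoidHom.range_eq_map]

end PowerBasis

end FreeGroup

theorem MonoidHom.ext_mzmod {n : ℕ} {G : Type*} [Group G] {f g : Multiplicative (ZMod n) →* G}
    (h : f (Multiplicative.ofAdd 1) = g (Multiplicative.ofAdd 1)) : f = g := by
  have hsurj : Function.Surjective (AddMonoidHom.toMultiplicative (Int.castAddHom (ZMod n))) :=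
    ZMod.intCast_surjective
  refine (MonoidHom.cancel_right hsurj).mp (MonoidHom.ext_mint ?_)
  simpa using h

theorem ZMod.val_intCast_of_nonneg_of_lt {n : ℕ} [NeZero n] {a : ℤ} (h₀ : 0 ≤ a) (h₁ : a < n) :
    ((a : ZMod n).val : ℤ) = a := by
  rw [ZMod.val_intCast, Int.emod_eq_of_lt h₀ h₁]

namespace FP

open Multiplicative SemidirectProduct

variable (d : ℕ)

lemma fpa_zpow_natCast : fpa d ^ (d : ℤ) = 1 :=
  (map_zpow (PresentedGroup.mk _) (FreeGroup.of 0) _).symm.trans (PresentedGroup.one_of_mem rfl)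

def aHom : Multiplicative (ZMod d) →* FP d :=
  AddMonoidHom.toMultiplicativeLeft <| ZMod.lift d
    ⟨(zpowersHom (FP d) (fpa d)).toAdditiveRight, fpa_zpow_natCast d⟩

lemma aHom_intCast (m : ℤ) : aHom d (ofAdd (m : ZMod d)) = fpa d ^ m := by
  simp [aHom, ZMod.lift_coe]

lemma aHom_one : aHom d (ofAdd 1) = fpa d := by
  simpa using aHom_intCast d 1

def translateAut : Multiplicative (ZMod d) →* MulAut (FreeGroup (ZMod d)) :=
  MonoidHom.mk' (fun g => FreeGroup.freeGroupCongr (Equiv.addLeft g.toAdd)) fun g h => by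
    apply MulEquiv.toMonoidHom_injective
    ext j
    simp [add_assoc]

@[simp]
lemma translateAut_of (g : Multiplicative (ZMod d)) (j : ZMod d) :
    translateAut d g (FreeGroup.of j) = FreeGroup.of (g.toAdd + j) := by
  simp [translateAut]

def tConjHom : FreeGroup (ZMod d) →* FP d :=
  FreeGroup.lift fun j => aHom d (ofAdd j) * fpt d * (aHom d (ofAdd j))⁻¹

@[simp]
lemma tConjHom_of (j : ZMod d) :
    tConjHom d (FreeGroup.of j) = aHom d (ofAdd j) * fpt d * (aHom d (ofAdd j))⁻¹ :=
  FreeGroup.lift_apply_of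

def ofSemidirect : FreeGroup (ZMod d) ⋊[translateAut d] Multiplicative (ZMod d) →* FP d :=
  SemidirectProduct.lift (tConjHom d) (aHom d) fun g => by
    ext j
    simp only [MonoidHom.comp_apply, MulEquiv.coe_toMonoidHom, translateAut_of, tConjHom_of,
      MulAut.conj_apply, ofAdd_add, ofAdd_toAdd, map_mul]
    group

def toSemidirect : FP d →* FreeGroup (ZMod d) ⋊[translateAut d] Multiplicative (ZMod d) :=
  PresentedGroup.toGroup (f := ![inr (ofAdd 1), inl (FreeGroup.of 0)]) <| by
    rintro _ rfl
    rw [map_zpow, FreeGroup.lift_apply_of, Matrix.cons_val_zero, ← map_zpow, ← ofAdd_zsmul]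
    simp

@[simp]
lemma toSemidirect_fpa : toSemidirect d (fpa d) = inr (ofAdd 1) := PresentedGroup.toGroup.of _

@[simp]
lemma toSemidirect_fpt : toSemidirect d (fpt d) = inl (FreeGroup.of 0) :=
  PresentedGroup.toGroup.of _

@[simp]
lemma ofSemidirect_inl (w : FreeGroup (ZMod d)) : ofSemidirect d (inl w) = tConjHom d w :=
  lift_inl _ _ _ _

@[simp]
lemma ofSemidirect_inr (g : Multiplicative (ZMod d)) : ofSemidirect d (inr g) = aHom d g :=
  lift_inr _ _ _ _

lemma ofSemidirect_comp_toSemidirect :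
    (ofSemidirect d).comp (toSemidirect d) = MonoidHom.id _ := by
  apply PresentedGroup.ext
  intro i
  fin_cases i
  · show ofSemidirect d (toSemidirect d (fpa d)) = fpa d
    simp [aHom_one]
  · show ofSemidirect d (toSemidirect d (fpt d)) = fpt d
    simp

lemma toSemidirect_comp_aHom : (toSemidirect d).comp (aHom d) = inr :=
  MonoidHom.ext_mzmod (by simp [aHom_one])

lemma toSemidirect_comp_ofSemidirect :
    (toSemidirect d).comp (ofSemidirect d) = MonoidHom.id _ := by
  have haHom (g : Multiplicative (ZMod d)) : toSemidirect d (aHom d g) = inr g :=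
    DFunLike.congr_fun (toSemidirect_comp_aHom d) g
  apply SemidirectProduct.hom_ext
  · apply FreeGroup.ext_hom
    intro j
    simp only [MonoidHom.comp_apply, ofSemidirect_inl, tConjHom_of, map_mul, map_inv, haHom,
      toSemidirect_fpt, MonoidHom.id_apply]
    rw [← map_inv, ← inl_aut, translateAut_of]
    simp
  · apply MonoidHom.ext_mzmod
    simp [haHom]

lemma tConjHom_injective : Function.Injective (tConjHom d) := by
  have hleft : Function.LeftInverse (toSemidirect d) (ofSemidirect d) :=
    DFunLike.congr_fun (toSemidirect_comp_ofSemidirect d)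
  rw [show ⇑(tConjHom d) = ofSemidirect d ∘ inl from funext fun w => (ofSemidirect_inl d w).symm]
  exact hleft.injective.comp inl_injective

lemma exists_tConjHom_mul_aHom (x : FP d) : ∃ w g, tConjHom d w * aHom d g = x := by
  refine ⟨(toSemidirect d x).left, (toSemidirect d x).right, ?_⟩
  rw [← ofSemidirect_inl, ← ofSemidirect_inr, ← map_mul, inl_left_mul_inr_right]
  exact DFunLike.congr_fun (ofSemidirect_comp_toSemidirect d) x

def piHom : FP d →* Multiplicative (ZMod d × ℤ) :=
  PresentedGroup.toGroup (f := ![ofAdd (1, 0), ofAdd (0, 1)]) <| by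
    rintro _ rfl
    rw [map_zpow, FreeGroup.lift_apply_of, Matrix.cons_val_zero, ← ofAdd_zsmul]
    simp

lemma piHom_fpa : piHom d (fpa d) = ofAdd (1, 0) := PresentedGroup.toGroup.of _

lemma piHom_fpt : piHom d (fpt d) = ofAdd (0, 1) := PresentedGroup.toGroup.of _

lemma piHom_tConjHom (w : FreeGroup (ZMod d)) :
    piHom d (tConjHom d w) = ofAdd (0, (FreeGroup.expSum _ w).toAdd) := by
  have : (piHom d).comp (tConjHom d) =
      (AddMonoidHom.inr (ZMod d) ℤ).toMultiplicative.comp (FreeGroup.expSum _) := by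
    refine FreeGroup.ext_hom _ _ fun j => ?_
    simp [piHom_fpt, mul_inv_cancel_comm]
  exact DFunLike.congr_fun this w

lemma piHom_aHom (g : Multiplicative (ZMod d)) : piHom d (aHom d g) = ofAdd (g.toAdd, 0) := by
  have : (piHom d).comp (aHom d) = (AddMonoidHom.inl (ZMod d) ℤ).toMultiplicative :=
    MonoidHom.ext_mzmod (by simp [aHom_one, piHom_fpa])
  exact DFunLike.congr_fun this g

lemma piHom_surjective : Function.Surjective (piHom d) := by
  intro y
  obtain ⟨m, hm⟩ := ZMod.intCast_surjective y.toAdd.1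
  refine ⟨fpa d ^ m * fpt d ^ y.toAdd.2, ?_⟩
  rw [map_mul, map_zpow, map_zpow, piHom_fpa, piHom_fpt, ← ofAdd_zsmul, ← ofAdd_zsmul, ← ofAdd_add]
  simp [hm]

lemma ker_piHom : (piHom d).ker = (FreeGroup.expSum (ZMod d)).ker.map (tConjHom d) := by
  apply le_antisymm
  · intro x hx
    obtain ⟨w, g, rfl⟩ := exists_tConjHom_mul_aHom d x
    rw [MonoidHom.mem_ker, map_mul, piHom_tConjHom, piHom_aHom, ← ofAdd_add] at hx
    obtain ⟨rfl, hw⟩ : g = 1 ∧ FreeGroup.expSum _ w = 1 := by simpa using hx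
    exact ⟨w, hw, by simp⟩
  · rintro _ ⟨w, hw, rfl⟩
    rw [SetLike.mem_coe, MonoidHom.mem_ker] at hw
    simp [piHom_tConjHom, hw]

section Commutators

variable [NeZero d]

def negResidueEquiv : {s : ℤ // 1 ≤ s ∧ s ≤ (d : ℤ) - 1} ≃ {j : ZMod d // j ≠ 0} where
  toFun s := ⟨-(s : ZMod d), neg_ne_zero.mpr fun h => by
    have := ZMod.val_intCast_of_nonneg_of_lt (n := d) (a := s) (by omega) (by omega)
    rw [h, ZMod.val_zero] at this
    omega⟩
  invFun j := ⟨((-j.1).val : ℤ), by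
    have h₁ := ZMod.val_lt (-j.1)
    have h₂ : (-j.1).val ≠ 0 := (ZMod.val_ne_zero _).mpr (neg_ne_zero.mpr j.2)
    omega⟩
  left_inv s := Subtype.ext <| by
    simpa using ZMod.val_intCast_of_nonneg_of_lt (n := d) (a := s) (by omega) (by omega)
  right_inv j := Subtype.ext (by simp)

def commutatorHom : FreeGroup ({k : ℤ // k ≠ 0} × {s : ℤ // 1 ≤ s ∧ s ≤ (d : ℤ) - 1}) →* FP d :=
  FreeGroup.lift fun p =>
    (fpt d ^ (p.1 : ℤ))⁻¹ * (fpa d ^ (p.2 : ℤ))⁻¹ * fpt d ^ (p.1 : ℤ) * fpa d ^ (p.2 : ℤ)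

lemma commutatorHom_eq : commutatorHom d = (tConjHom d).comp ((FreeGroup.powerBasisHom 0).comp
    (FreeGroup.freeGroupCongr ((Equiv.refl _).prodCongr
      (negResidueEquiv d))).toMonoidHom) := by
  refine FreeGroup.ext_hom _ _ fun ⟨k, s⟩ => ?_
  have hconj := conj_zpow (i := (k : ℤ)) (a := (fpa d ^ (s : ℤ))⁻¹) (b := fpt d)
  rw [inv_inv] at hconj
  simp only [commutatorHom, FreeGroup.powerBasisHom, negResidueEquiv]
  simp [aHom_intCast, hconj]
  group

lemma commutatorHom_injective : Function.Injective (commutatorHom d) := by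
  rw [commutatorHom_eq]
  exact (tConjHom_injective d).comp
    ((FreeGroup.powerBasisHom_injective 0).comp (MulEquiv.injective _))

lemma range_commutatorHom : (commutatorHom d).range = (piHom d).ker := by
  rw [commutatorHom_eq, MonoidHom.range_comp, MonoidHom.range_comp,
    MonoidHom.range_eq_top.mpr (MulEquiv.surjective _), ← MonoidHom.range_eq_map,
    FreeGroup.range_powerBasisHom, ker_piHom]

end Commutators

end FP

/-- The kernel `D` of the natural surjection `ℤ/dℤ * ℤ → ℤ/dℤ × ℤ` (the Cartesian
subgroup of the free product `⟨a, t ∣ a^d = 1⟩`) is a free group, freely generated by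
the commutators `[t^k, a^s] = t^(-k) a^(-s) t^k a^s` for `k ∈ ℤ \ {0}` and
`1 ≤ s ≤ d - 1`. -/
theorem cartesian_subgroup_free (d : ℕ) (hd : 2 ≤ d) :
    ∃ π : FP d →* Multiplicative (ZMod d × ℤ),
      π (fpa d) = Multiplicative.ofAdd (1, 0) ∧
      π (fpt d) = Multiplicative.ofAdd (0, 1) ∧
      Function.Surjective π ∧
      ∃ e : FreeGroup ({k : ℤ // k ≠ 0} × {s : ℤ // 1 ≤ s ∧ s ≤ (d : ℤ) - 1}) ≃*
          MonoidHom.ker π,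
        ∀ (k : {k : ℤ // k ≠ 0}) (s : {s : ℤ // 1 ≤ s ∧ s ≤ (d : ℤ) - 1}),
          (↑(e (FreeGroup.of (k, s))) : FP d) =
            (fpt d ^ (k : ℤ))⁻¹ * (fpa d ^ (s : ℤ))⁻¹ * fpt d ^ (k : ℤ) * fpa d ^ (s : ℤ) := by
  have : NeZero d := ⟨by omega⟩
  refine ⟨FP.piHom d, FP.piHom_fpa d, FP.piHom_fpt d, FP.piHom_surjective d,
    (MonoidHom.ofInjective (FP.commutatorHom_injective d)).trans
      (MulEquiv.subgroupCongr (FP.range_commutatorHom d)), fun k s => ?_⟩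
  show FP.commutatorHom d (FreeGroup.of (k, s)) = _
  exact FreeGroup.lift_apply_of
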